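/- Let N = (L_1, M_1), …, (L_r, M_r) (r ≥ 1) be a special convenient integral Newton-polygon datum satisfying conditions (A1)–(A3). Then γ_0 := 1 + M_1 + ⋯ + M_r and γ_i := (1 + M_1 + ⋯ + M_{i−1})·L_i/M_i for i = 1, …, r are positive integers with γ_0 < γ_1 < ⋯ < γ_r that satisfy Bresinsky's conditions. -/
import Mathlib


/-- A canonical Newton-polygon datum with `r` edges: a pair of `1`-indexed sequences
`(L, M)` of positive rationals with strictly increasing inclinations `L k / M k`. -/
def IsCanonicalNP (p : (ℕ → ℚ) × (ℕ → ℚ)) (r : ℕ) : Prop :=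
  (∀ k, 1 ≤ k → k ≤ r → 0 < p.1 k ∧ 0 < p.2 k) ∧
  ∀ k, 1 ≤ k → k < r → p.1 k / p.2 k < p.1 (k + 1) / p.2 (k + 1)

/-- An integral datum: all the entries are positive integers. -/
def IsIntegralNP (p : (ℕ → ℚ) × (ℕ → ℚ)) (r : ℕ) : Prop :=
  ∀ k, 1 ≤ k → k ≤ r →
    (∃ a : ℕ, 0 < a ∧ p.1 k = a) ∧ (∃ b : ℕ, 0 < b ∧ p.2 k = b)

/-- A special datum: all the inclinations are greater than `1`. -/
def IsSpecialNP (p : (ℕ → ℚ) × (ℕ → ℚ)) (r : ℕ) : Prop :=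
  ∀ k, 1 ≤ k → k ≤ r → 1 < p.1 k / p.2 k

/-- A special convenient integral Newton-polygon datum with `r` edges. -/
def IsSCI (p : (ℕ → ℚ) × (ℕ → ℚ)) (r : ℕ) : Prop :=
  IsCanonicalNP p r ∧ IsIntegralNP p r ∧ IsSpecialNP p r

/-- The height `ht(N) = M_1 + ⋯ + M_r` of a Newton-polygon datum with `r` edges. -/
def htNP (p : (ℕ → ℚ) × (ℕ → ℚ)) (r : ℕ) : ℚ := ∑ k ∈ Finset.Icc 1 r, p.2 k

/-- The abrasion `A(N)` of a datum with `r` edges: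
`L̃_i = ((1 + M_1 + ⋯ + M_{r−1})/(1 + M_1 + ⋯ + M_r))·L_i`, the `M_i` are unchanged. -/
def abrNP (p : (ℕ → ℚ) × (ℕ → ℚ)) (r : ℕ) : (ℕ → ℚ) × (ℕ → ℚ) :=
  (fun i => ((1 + ∑ k ∈ Finset.Icc 1 (r - 1), p.2 k) /
      (1 + ∑ k ∈ Finset.Icc 1 r, p.2 k)) * p.1 i,
   p.2)

/-- The iterate `A^i(N)` of the abrasion; `A^i(N)` has `r − i` edges. -/
def abrIterNP (p : (ℕ → ℚ) × (ℕ → ℚ)) (r : ℕ) : ℕ → (ℕ → ℚ) × (ℕ → ℚ)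
  | 0 => p
  | i + 1 => abrNP (abrIterNP p r i) (r - i)

/-- Condition (A1): `1 + ht(N) < L_1/M_1`. -/
def CondA1 (p : (ℕ → ℚ) × (ℕ → ℚ)) (r : ℕ) : Prop :=
  1 + htNP p r < p.1 1 / p.2 1

/-- Condition (A2): for `0 ≤ i ≤ r−1`, `A^i(N)` is a special convenient integral datum
and `L̃^{(i)}_1/M̃^{(i)}_1 ∈ ℕ`; for `0 ≤ i ≤ r−2`,
`(1 + M̃^{(i)}_1 + ⋯ + M̃^{(i)}_{r−i−1})·(L̃^{(i)}_{r−i}/M̃^{(i)}_{r−i}) ∈ ℕ`. -/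
def CondA2 (p : (ℕ → ℚ) × (ℕ → ℚ)) (r : ℕ) : Prop :=
  (∀ i, i ≤ r - 1 → IsSCI (abrIterNP p r i) (r - i) ∧
    ∃ a : ℕ, (abrIterNP p r i).1 1 / (abrIterNP p r i).2 1 = a) ∧
  (∀ i, i + 2 ≤ r → ∃ a : ℕ,
    (1 + ∑ k ∈ Finset.Icc 1 (r - i - 1), (abrIterNP p r i).2 k) *
      ((abrIterNP p r i).1 (r - i) / (abrIterNP p r i).2 (r - i)) = a)

/-- Condition (A3): for `0 ≤ i ≤ r−1`,
`gcd(1 + ht(A^i(N)), L̃^{(i)}_1, …, L̃^{(i)}_{r−i}) = 1` (the gcd of the integer-valued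
rationals being taken via their numerators). -/
def CondA3 (p : (ℕ → ℚ) × (ℕ → ℚ)) (r : ℕ) : Prop :=
  ∀ i, i ≤ r - 1 →
    Nat.gcd (1 + htNP (abrIterNP p r i) (r - i)).num.natAbs
      ((Finset.Icc 1 (r - i)).gcd fun k => ((abrIterNP p r i).1 k).num.natAbs) = 1

/-- Positive integers `γ_0 < γ_1 < ⋯ < γ_r` satisfy Bresinsky's conditions if
(1) `gcd(γ_0, …, γ_r) = 1`; (2) `gcd(γ_0, …, γ_i) < gcd(γ_0, …, γ_{i−1})` for all
`1 ≤ i ≤ r`; and (3) `(gcd(γ_0, …, γ_{i−1})/gcd(γ_0, …, γ_i))·γ_i < γ_{i+1}` for all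
`1 ≤ i ≤ r−1`. -/
def IsBresinsky (γ : ℕ → ℕ) (r : ℕ) : Prop :=
  (∀ k, k ≤ r → 0 < γ k) ∧ (∀ k, k < r → γ k < γ (k + 1)) ∧
  (Finset.range (r + 1)).gcd γ = 1 ∧
  (∀ i, 1 ≤ i → i ≤ r →
    (Finset.range (i + 1)).gcd γ < (Finset.range i).gcd γ) ∧
  (∀ i, 1 ≤ i → i + 1 ≤ r →
    ((Finset.range i).gcd γ / (Finset.range (i + 1)).gcd γ) * γ i < γ (i + 1))

lemma NP_aux (p : (ℕ → ℚ) × (ℕ → ℚ)) (r : ℕ) (hr : 1 ≤ r) :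
    ∀ i, abrIterNP p r (i+1) = abrIterNP (abrNP p r) (r-1) i
  | 0 => rfl
  | (i+1) => by
      show abrNP (abrIterNP p r (i+1)) (r - (i+1))
          = abrNP (abrIterNP (abrNP p r) (r-1) i) ((r-1) - i)
      rw [NP_aux p r hr i]
      congr 1
      omega

lemma NP_qnat {x : ℚ} (h : ∃ a : ℕ, 0 < a ∧ x = a) :
    0 < x.num.toNat ∧ ((x.num.toNat : ℕ) : ℚ) = x := by
  obtain ⟨a, ha, rfl⟩ := h; simp [ha]

lemma NP_qnatAbs {x : ℚ} {a : ℕ} (h : x = a) : x.num.natAbs = a := by subst h; simp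

lemma NP_sum_Icc_split {M : Type*} [AddCommMonoid M] (f : ℕ → M) {k : ℕ} (hk : 1 ≤ k) :
    ∑ j ∈ Finset.Icc 1 k, f j = (∑ j ∈ Finset.Icc 1 (k-1), f j) + f k := by
  obtain ⟨k', rfl⟩ : ∃ k', k = k' + 1 := ⟨k - 1, by omega⟩
  rw [Finset.sum_Icc_succ_top (by omega)]
  simp

lemma NP_gcd_range_succ (f : ℕ → ℕ) (n : ℕ) :
    (Finset.range (n+1)).gcd f = Nat.gcd (f n) ((Finset.range n).gcd f) := by
  rw [Finset.range_add_one, Finset.gcd_insert]; rfl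

lemma NPmaster (r : ℕ) (hr : 1 ≤ r) :
    ∀ p : (ℕ → ℚ) × (ℕ → ℚ), IsSCI p r → CondA1 p r → CondA2 p r → CondA3 p r →
    ∃ γ : ℕ → ℕ,
      ((γ 0 : ℚ) = 1 + ∑ k ∈ Finset.Icc 1 r, p.2 k) ∧
      (∀ i, 1 ≤ i → i ≤ r →
        (γ i : ℚ) = (1 + ∑ k ∈ Finset.Icc 1 (i-1), p.2 k) * (p.1 i / p.2 i)) ∧
      (∀ j, j ≤ r → (((Finset.range (j+1)).gcd γ : ℕ) : ℚ) * (1 + ∑ k ∈ Finset.Icc 1 j, p.2 k)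
          = 1 + ∑ k ∈ Finset.Icc 1 r, p.2 k) := by
  induction r, hr using Nat.le_induction with
  | base =>
    intro p hSCI h1 h2 h3
    obtain ⟨hCan, hInt, hSpec⟩ := hSCI
    obtain ⟨hm1pos, hm1⟩ := NP_qnat ((hInt 1 le_rfl le_rfl).2)
    obtain ⟨hl1pos, hl1⟩ := NP_qnat ((hInt 1 le_rfl le_rfl).1)
    obtain ⟨c, hc⟩ := (h2.1 0 (by norm_num)).2
    have hc' : p.1 1 / p.2 1 = (c : ℚ) := hc
    have hm2pos : (0:ℚ) < p.2 1 := (hCan.1 1 le_rfl le_rfl).2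
    set m1 := (p.2 1).num.toNat with hm1def
    set l1 := (p.1 1).num.toNat with hl1def
    have hsum : ∑ k ∈ Finset.Icc 1 1, p.2 k = p.2 1 := by simp
    have hsum0 : ∑ k ∈ Finset.Icc 1 0, p.2 k = 0 := by simp
    -- l1 = c * m1
    have hlc : l1 = c * m1 := by
      have : (l1 : ℚ) = (c : ℚ) * m1 := by
        rw [hl1, hm1]
        field_simp at hc' ⊢
        linarith [hc']
      exact_mod_cast this
    refine ⟨fun j => if j = 0 then 1 + m1 else c, ?_, ?_, ?_⟩
    · simp only [if_pos rfl, hsum]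
      push_cast
      rw [hm1]
    · intro i h1i hi1
      have hi : i = 1 := le_antisymm hi1 h1i
      subst hi
      simp only [if_neg (one_ne_zero), hsum0]
      rw [← hc']
      ring
    · intro j hj
      interval_cases j
      · rw [show (Finset.range 1).gcd (fun j => if j = 0 then 1 + m1 else c) = 1 + m1 by
          simp [Finset.range_one]]
        rw [hsum0, hsum]
        push_cast
        rw [hm1]
        ring
      · have hA3 := h3 0 (by norm_num)
        have habs1 : (1 + htNP (abrIterNP p 1 0) 1).num.natAbs = 1 + m1 := by
          apply NP_qnatAbs
          show 1 + htNP p 1 = ((1 + m1 : ℕ) : ℚ)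
          unfold htNP
          rw [hsum]
          push_cast
          rw [hm1]
        have habs2 : ((Finset.Icc 1 1).gcd fun k => ((abrIterNP p 1 0).1 k).num.natAbs) = l1 := by
          simp only [Finset.Icc_self, Finset.gcd_singleton]
          show normalize ((p.1 1).num.natAbs) = l1
          rw [NP_qnatAbs hl1.symm]
          simp
        rw [habs1, habs2] at hA3
        have hg : (Finset.range 2).gcd (fun j => if j = 0 then 1 + m1 else c) = 1 := by
          rw [NP_gcd_range_succ]
          simp only [if_neg one_ne_zero, Finset.range_one, Finset.gcd_singleton, if_pos rfl,
            normalize_eq]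
          have hdvd : Nat.gcd c (1 + m1) ∣ Nat.gcd (1 + m1) l1 :=
            Nat.dvd_gcd (Nat.gcd_dvd_right _ _)
              ((Nat.gcd_dvd_left _ _).trans (⟨m1, hlc⟩ : c ∣ l1))
          rw [hA3] at hdvd
          exact Nat.dvd_one.mp hdvd
        rw [hg]
        norm_num
      
  | succ r hr IH =>
    intro p hSCI h1 h2 h3
    obtain ⟨hCan, hInt, hSpec⟩ := hSCI
    obtain ⟨m, hm⟩ : ∃ m : ℕ → ℕ, ∀ k, 1 ≤ k → k ≤ r+1 → 0 < m k ∧ (m k : ℚ) = p.2 k :=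
      ⟨fun k => (p.2 k).num.toNat, fun k hk1 hk2 => NP_qnat (hInt k hk1 hk2).2⟩
    obtain ⟨l, hl⟩ : ∃ l : ℕ → ℕ, ∀ k, 1 ≤ k → k ≤ r+1 → 0 < l k ∧ (l k : ℚ) = p.1 k :=
      ⟨fun k => (p.1 k).num.toNat, fun k hk1 hk2 => NP_qnat (hInt k hk1 hk2).1⟩
    have hS : ∀ j, j ≤ r+1 →
        ((1 + ∑ k ∈ Finset.Icc 1 j, m k : ℕ) : ℚ) = 1 + ∑ k ∈ Finset.Icc 1 j, p.2 k := by
      intro j hj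
      push_cast
      congr 1
      exact Finset.sum_congr rfl (fun k hk =>
        (hm k (Finset.mem_Icc.mp hk).1 (le_trans (Finset.mem_Icc.mp hk).2 hj)).2)
    have hSpos : ∀ j, j ≤ r+1 → (0:ℚ) < 1 + ∑ k ∈ Finset.Icc 1 j, p.2 k := by
      intro j hj
      rw [← hS j hj]
      exact_mod_cast Nat.add_pos_left Nat.one_pos _
    set p' := abrNP p (r+1) with hp'def
    have hp'1 : ∀ i, p'.1 i = ((1 + ∑ k ∈ Finset.Icc 1 r, p.2 k) /
        (1 + ∑ k ∈ Finset.Icc 1 (r+1), p.2 k)) * p.1 i := fun i => rfl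
    have hp'2 : p'.2 = p.2 := rfl
    have hshift : ∀ i, abrIterNP p (r+1) (i+1) = abrIterNP p' r i := by
      intro i
      have := NP_aux p (r+1) (by omega) i
      simpa using this
    have hSCI' : IsSCI p' r := by
      have h := (h2.1 1 (by omega)).1
      have e : abrIterNP p (r+1) 1 = p' := rfl
      rw [e] at h
      simpa using h
    have hA1' : CondA1 p' r := by
      show 1 + htNP p' r < p'.1 1 / p'.2 1
      unfold htNP
      rw [hp'1 1]
      simp only [hp'2]
      have h1' : 1 + ∑ k ∈ Finset.Icc 1 (r+1), p.2 k < p.1 1 / p.2 1 := h1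
      have c1 : (0:ℚ) < 1 + ∑ k ∈ Finset.Icc 1 r, p.2 k := hSpos r (by omega)
      have c2 : (0:ℚ) < 1 + ∑ k ∈ Finset.Icc 1 (r+1), p.2 k := hSpos (r+1) le_rfl
      rw [mul_div_assoc]
      calc 1 + ∑ k ∈ Finset.Icc 1 r, p.2 k
          = ((1 + ∑ k ∈ Finset.Icc 1 r, p.2 k) / (1 + ∑ k ∈ Finset.Icc 1 (r+1), p.2 k)) *
              (1 + ∑ k ∈ Finset.Icc 1 (r+1), p.2 k) := by
            rw [div_mul_cancel₀ _ c2.ne']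
        _ < ((1 + ∑ k ∈ Finset.Icc 1 r, p.2 k) / (1 + ∑ k ∈ Finset.Icc 1 (r+1), p.2 k)) *
              (p.1 1 / p.2 1) := by
            exact mul_lt_mul_of_pos_left h1' (div_pos c1 c2)
    have hA2' : CondA2 p' r := by
      constructor
      · intro i hi
        have h := h2.1 (i+1) (by omega)
        rw [hshift i] at h
        simpa [Nat.succ_sub_succ] using h
      · intro i hi
        have h := h2.2 (i+1) (by omega)
        rw [hshift i] at h
        simpa [Nat.succ_sub_succ] using h
    have hA3' : CondA3 p' r := by
      intro i hi
      have h := h3 (i+1) (by omega)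
      rw [hshift i] at h
      simpa [Nat.succ_sub_succ] using h
    obtain ⟨γ', hg'0, hg'v, hg'e⟩ := IH p' hSCI' hA1' hA2' hA3'
    simp only [hp'2] at hg'0 hg'v hg'e
    simp only [hp'1] at hg'v
    have hg'eN : ∀ j, j ≤ r → ((Finset.range (j+1)).gcd γ') * (1 + ∑ k ∈ Finset.Icc 1 j, m k)
        = 1 + ∑ k ∈ Finset.Icc 1 r, m k := by
      intro j hj
      have h := hg'e j hj
      rw [← hS j (by omega), ← hS r (by omega)] at h
      exact_mod_cast h
    have hchain : ∀ j, 1 ≤ j → j ≤ r →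
        (1 + ∑ k ∈ Finset.Icc 1 (j-1), m k) ∣ (1 + ∑ k ∈ Finset.Icc 1 j, m k) := by
      intro j h1j hjr
      obtain ⟨j', rfl⟩ : ∃ j', j = j' + 1 := ⟨j - 1, by omega⟩
      have hd : (Finset.range (j'+1+1)).gcd γ' ∣ (Finset.range (j'+1)).gcd γ' :=
        Finset.gcd_mono (by intro x hx; simp only [Finset.mem_range] at hx ⊢; omega)
      obtain ⟨t, ht⟩ := hd
      have e1 := hg'eN (j'+1) hjr
      have e2 := hg'eN j' (by omega)
      simp only [Nat.add_sub_cancel]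
      refine ⟨t, ?_⟩
      have hpos : 0 < (Finset.range (j'+1+1)).gcd γ' := by
        rcases Nat.eq_zero_or_pos ((Finset.range (j'+1+1)).gcd γ') with h0 | h0
        · rw [h0, zero_mul] at e1; omega
        · exact h0
      apply Nat.eq_of_mul_eq_mul_left hpos
      calc (Finset.range (j'+1+1)).gcd γ' * (1 + ∑ k ∈ Finset.Icc 1 (j'+1), m k)
          = (Finset.range (j'+1)).gcd γ' * (1 + ∑ k ∈ Finset.Icc 1 j', m k) := by rw [e1, e2]
        _ = (Finset.range (j'+1+1)).gcd γ' * ((1 + ∑ k ∈ Finset.Icc 1 j', m k) * t) := by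
            rw [ht]; ring
    -- entries of p' are integers
    obtain ⟨l', hl'⟩ : ∃ l' : ℕ → ℕ, ∀ k, 1 ≤ k → k ≤ r → 0 < l' k ∧ (l' k : ℚ) = p'.1 k :=
      ⟨fun k => (p'.1 k).num.toNat, fun k hk1 hk2 => NP_qnat (hSCI'.2.1 k hk1 hk2).1⟩
    have hrel : ∀ j, 1 ≤ j → j ≤ r →
        l' j * (1 + ∑ k ∈ Finset.Icc 1 (r+1), m k) = (1 + ∑ k ∈ Finset.Icc 1 r, m k) * l j := by
      intro j h1j h2j
      have c1 : (0:ℚ) < 1 + ∑ k ∈ Finset.Icc 1 r, p.2 k := hSpos r (by omega)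
      have c2 : (0:ℚ) < 1 + ∑ k ∈ Finset.Icc 1 (r+1), p.2 k := hSpos (r+1) le_rfl
      have hq : (l' j : ℚ) * (1 + ∑ k ∈ Finset.Icc 1 (r+1), p.2 k)
          = (1 + ∑ k ∈ Finset.Icc 1 r, p.2 k) * l j := by
        rw [(hl' j h1j h2j).2, hp'1 j, ← (hl j h1j (by omega)).2]
        field_simp
      rw [← hS (r+1) le_rfl, ← hS r (by omega)] at hq
      exact_mod_cast hq
    have hdvdr : (1 + ∑ k ∈ Finset.Icc 1 r, m k) ∣ (1 + ∑ k ∈ Finset.Icc 1 (r+1), m k) := by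
      have hApos : 0 < 1 + ∑ k ∈ Finset.Icc 1 (r+1), m k := by omega
      set A := 1 + ∑ k ∈ Finset.Icc 1 (r+1), m k with hA
      set B := 1 + ∑ k ∈ Finset.Icc 1 r, m k with hB
      set g := Nat.gcd A B with hgdef
      have hgpos : 0 < g := Nat.gcd_pos_of_pos_left _ hApos
      have hgA : g ∣ A := Nat.gcd_dvd_left _ _
      have hgB : g ∣ B := Nat.gcd_dvd_right _ _
      have hco : Nat.Coprime (A / g) (B / g) := Nat.coprime_div_gcd_div_gcd hgpos
      have hvv : ∀ j, 1 ≤ j → j ≤ r → (B / g) ∣ l' j := by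
        intro j h1j h2j
        have h := hrel j h1j h2j
        have hA' : g * (A / g) = A := Nat.mul_div_cancel' hgA
        have hB' : g * (B / g) = B := Nat.mul_div_cancel' hgB
        have h2eq : l' j * (A / g) = (B / g) * l j := by
          apply Nat.eq_of_mul_eq_mul_left hgpos
          calc g * (l' j * (A / g)) = l' j * (g * (A/g)) := by ring
            _ = l' j * A := by rw [hA']
            _ = B * l j := h
            _ = (g * (B/g)) * l j := by rw [hB']
            _ = g * ((B/g) * l j) := by ring
        exact Nat.Coprime.dvd_of_dvd_mul_right hco.symm ⟨l j, h2eq⟩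
      have hA3 := h3 1 (by omega)
      have e : abrIterNP p (r+1) 1 = p' := rfl
      rw [e] at hA3
      simp only [Nat.add_sub_cancel] at hA3
      have habs1 : (1 + htNP p' r).num.natAbs = B := by
        apply NP_qnatAbs
        show 1 + htNP p' r = ((B : ℕ) : ℚ)
        unfold htNP
        simp only [hp'2]
        exact (hS r (by omega)).symm
      have habs2 : ((Finset.Icc 1 r).gcd fun k => ((p'.1 k).num.natAbs))
          = (Finset.Icc 1 r).gcd l' := by
        apply Finset.gcd_congr rfl
        intro x hx
        simp only [Finset.mem_Icc] at hx
        exact NP_qnatAbs ((hl' x hx.1 hx.2).2).symm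
      rw [habs1, habs2] at hA3
      have hvv1 : (B / g) ∣ 1 := by
        rw [← hA3]
        exact Nat.dvd_gcd ⟨g, (Nat.div_mul_cancel hgB).symm⟩
          (Finset.dvd_gcd (fun x hx => by
            simp only [Finset.mem_Icc] at hx
            exact hvv x hx.1 hx.2))
      have hBg : B = g := by
        have h1'' : B / g = 1 := Nat.dvd_one.mp hvv1
        have := Nat.mul_div_cancel' hgB
        rw [h1''] at this
        omega
      rw [hBg]
      exact hgA
    obtain ⟨u, hu⟩ := hdvdr
    -- hu : 1 + ∑_{r+1} m = (1 + ∑_r m) * u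
    have huq : (u:ℚ) * (1 + ∑ k ∈ Finset.Icc 1 r, p.2 k) = 1 + ∑ k ∈ Finset.Icc 1 (r+1), p.2 k := by
      rw [← hS r (by omega), ← hS (r+1) le_rfl]
      exact_mod_cast by rw [hu]; ring
    have hSrq : (0:ℚ) < 1 + ∑ k ∈ Finset.Icc 1 r, p.2 k := hSpos r (by omega)
    have hSRq : (0:ℚ) < 1 + ∑ k ∈ Finset.Icc 1 (r+1), p.2 k := hSpos (r+1) le_rfl
    have huq' : (u:ℚ) = (1 + ∑ k ∈ Finset.Icc 1 (r+1), p.2 k) / (1 + ∑ k ∈ Finset.Icc 1 r, p.2 k) := by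
      rw [eq_div_iff hSrq.ne']
      exact huq
    obtain ⟨c, hc⟩ := h2.2 0 (by omega)
    have hc' : (1 + ∑ k ∈ Finset.Icc 1 r, p.2 k) * (p.1 (r+1) / p.2 (r+1)) = (c:ℚ) := hc
    set γ : ℕ → ℕ := fun j => if j = r+1 then c else u * γ' j with hγ
    have hγtop : γ (r+1) = c := by simp [hγ]
    have hγlow : ∀ j, j < r+1 → γ j = u * γ' j := by
      intro j hj
      simp [hγ, Nat.ne_of_lt hj]
    have hval0 : (γ 0 : ℚ) = 1 + ∑ k ∈ Finset.Icc 1 (r+1), p.2 k := by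
      rw [hγlow 0 (by omega)]
      push_cast
      rw [hg'0]
      exact huq
    have hval : ∀ i, 1 ≤ i → i ≤ r+1 →
        (γ i : ℚ) = (1 + ∑ k ∈ Finset.Icc 1 (i-1), p.2 k) * (p.1 i / p.2 i) := by
      intro i h1i hi
      rcases Nat.lt_or_ge i (r+1) with hlt | hge
      · have hir : i ≤ r := by omega
        rw [hγlow i hlt]
        push_cast
        rw [hg'v i h1i hir, huq']
        have hm2 : (0:ℚ) < p.2 i := (hCan.1 i h1i (by omega)).2
        field_simp
      · have hi' : i = r+1 := by omega
        subst hi'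
        rw [hγtop]
        simp only [Nat.add_sub_cancel]
        exact hc'.symm
    have he'r : (Finset.range (r+1)).gcd γ' = 1 := by
      have h := hg'eN r le_rfl
      have hpos : 0 < 1 + ∑ k ∈ Finset.Icc 1 r, m k := by omega
      exact Nat.eq_of_mul_eq_mul_right hpos (by rw [h, one_mul])
    have hgcd : ∀ j, j ≤ r+1 →
        (((Finset.range (j+1)).gcd γ : ℕ) : ℚ) * (1 + ∑ k ∈ Finset.Icc 1 j, p.2 k)
        = 1 + ∑ k ∈ Finset.Icc 1 (r+1), p.2 k := by
      intro j hj
      rcases Nat.lt_or_ge j (r+1) with hlt | hge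
      · have hjr : j ≤ r := by omega
        have hgq : (Finset.range (j+1)).gcd γ = u * (Finset.range (j+1)).gcd γ' := by
          have h := Finset.gcd_congr (rfl : Finset.range (j+1) = Finset.range (j+1))
            (fun x hx => hγlow x (by simp only [Finset.mem_range] at hx; omega))
          rw [h, Finset.gcd_mul_left, normalize_eq]
        rw [hgq]
        push_cast
        rw [mul_assoc, hg'e j hjr]
        exact huq
      · have hj' : j = r+1 := by omega
        subst hj'
        -- d := gcd c u divides everything
        have hd : ∀ j, 1 ≤ j → j ≤ r+1 → Nat.gcd c u ∣ l j := by
          intro j h1j hj2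
          have hch : (1 + ∑ k ∈ Finset.Icc 1 (j-1), m k) ∣ (1 + ∑ k ∈ Finset.Icc 1 j, m k) := by
            rcases Nat.lt_or_ge j (r+1) with h | h
            · exact hchain j h1j (by omega)
            · have hj3 : j = r+1 := by omega
              subst hj3
              simpa using ⟨u, hu⟩
          have hsplit : ∑ k ∈ Finset.Icc 1 j, m k = (∑ k ∈ Finset.Icc 1 (j-1), m k) + m j :=
            NP_sum_Icc_split m h1j
          have hchm : (1 + ∑ k ∈ Finset.Icc 1 (j-1), m k) ∣ m j := by
            have h2 := Nat.dvd_sub hch (dvd_refl (1 + ∑ k ∈ Finset.Icc 1 (j-1), m k))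
            have h3' : (1 + ∑ k ∈ Finset.Icc 1 j, m k) - (1 + ∑ k ∈ Finset.Icc 1 (j-1), m k)
                = m j := by omega
            rwa [h3'] at h2
          obtain ⟨t, ht⟩ := hchm
          have hγj : (γ j : ℚ) * m j = (1 + ∑ k ∈ Finset.Icc 1 (j-1), p.2 k) * l j := by
            rw [hval j h1j hj2, ← (hm j h1j hj2).2, ← (hl j h1j hj2).2]
            have hmpos : (0:ℚ) < (m j : ℚ) := by exact_mod_cast (hm j h1j hj2).1
            field_simp
          have hγjn : γ j * t = l j := by
            have hSq : ((1 + ∑ k ∈ Finset.Icc 1 (j-1), m k : ℕ) : ℚ)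
                = 1 + ∑ k ∈ Finset.Icc 1 (j-1), p.2 k := hS (j-1) (by omega)
            have hmj : ((m j : ℕ) : ℚ)
                = (1 + ∑ k ∈ Finset.Icc 1 (j-1), p.2 k) * t := by
              rw [← hSq]
              exact_mod_cast congrArg (fun n : ℕ => (n:ℚ)) ht
            rw [hmj] at hγj
            have hS0 : (1 + ∑ k ∈ Finset.Icc 1 (j-1), p.2 k) ≠ 0 :=
              (hSpos (j-1) (by omega)).ne'
            have h2 : (1 + ∑ k ∈ Finset.Icc 1 (j-1), p.2 k) * ((γ j : ℚ) * t)
                = (1 + ∑ k ∈ Finset.Icc 1 (j-1), p.2 k) * (l j) := by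
              calc (1 + ∑ k ∈ Finset.Icc 1 (j-1), p.2 k) * ((γ j : ℚ) * t)
                  = (γ j : ℚ) * ((1 + ∑ k ∈ Finset.Icc 1 (j-1), p.2 k) * t) := by ring
                _ = (1 + ∑ k ∈ Finset.Icc 1 (j-1), p.2 k) * (l j) := hγj
            exact_mod_cast mul_left_cancel₀ hS0 h2
          have hdγ : Nat.gcd c u ∣ γ j := by
            rcases Nat.lt_or_ge j (r+1) with h | h
            · rw [hγlow j h]
              exact Dvd.dvd.mul_right (Nat.gcd_dvd_right _ _) _
            · have hj3 : j = r+1 := by omega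
              subst hj3
              rw [hγtop]
              exact Nat.gcd_dvd_left _ _
          exact hdγ.trans ⟨t, hγjn.symm⟩
        have hdS : Nat.gcd c u ∣ 1 + ∑ k ∈ Finset.Icc 1 (r+1), m k :=
          (Nat.gcd_dvd_right _ _).trans ⟨1 + ∑ k ∈ Finset.Icc 1 r, m k, by rw [hu]; ring⟩
        have hA30 := h3 0 (by omega)
        have e0 : abrIterNP p (r+1) 0 = p := rfl
        rw [e0] at hA30
        simp only [Nat.sub_zero] at hA30
        have habs1 : (1 + htNP p (r+1)).num.natAbs = 1 + ∑ k ∈ Finset.Icc 1 (r+1), m k := by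
          apply NP_qnatAbs
          show 1 + htNP p (r+1) = ((1 + ∑ k ∈ Finset.Icc 1 (r+1), m k : ℕ) : ℚ)
          unfold htNP
          exact (hS (r+1) le_rfl).symm
        have habs2 : ((Finset.Icc 1 (r+1)).gcd fun k => (p.1 k).num.natAbs)
            = (Finset.Icc 1 (r+1)).gcd l := by
          apply Finset.gcd_congr rfl
          intro x hx
          simp only [Finset.mem_Icc] at hx
          exact NP_qnatAbs ((hl x hx.1 hx.2).2).symm
        rw [habs1, habs2] at hA30
        have hcu : Nat.gcd c u = 1 := by
          apply Nat.dvd_one.mp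
          rw [← hA30]
          exact Nat.dvd_gcd hdS (Finset.dvd_gcd (fun x hx => by
            simp only [Finset.mem_Icc] at hx
            exact hd x hx.1 hx.2))
        have h2' : (Finset.range (r+1)).gcd γ = u := by
          have h := Finset.gcd_congr (rfl : Finset.range (r+1) = Finset.range (r+1))
            (fun x hx => hγlow x (by simp only [Finset.mem_range] at hx; omega))
          rw [h, Finset.gcd_mul_left, normalize_eq, he'r, mul_one]
        have hone : (Finset.range (r+1+1)).gcd γ = 1 := by
          rw [NP_gcd_range_succ, hγtop, h2']
          exact hcu
        rw [hone]
        norm_num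
    exact ⟨γ, hval0, hval, hgcd⟩

/-- For a special convenient integral Newton-polygon datum `N` with
`r ≥ 1` edges satisfying (A1)–(A3), the numbers `γ_0 := 1 + M_1 + ⋯ + M_r` and
`γ_i := (1 + M_1 + ⋯ + M_{i−1})·L_i/M_i` (`i = 1, …, r`) are positive integers with
`γ_0 < γ_1 < ⋯ < γ_r` satisfying Bresinsky's conditions. -/
theorem abrasion_gives_bresinsky
    (p : (ℕ → ℚ) × (ℕ → ℚ)) (r : ℕ) (hr : 1 ≤ r)
    (hSCI : IsSCI p r) (h1 : CondA1 p r) (h2 : CondA2 p r) (h3 : CondA3 p r) :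
    ∃ γ : ℕ → ℕ,
      (γ 0 : ℚ) = 1 + htNP p r ∧
      (∀ i, 1 ≤ i → i ≤ r →
        (γ i : ℚ) = (1 + ∑ k ∈ Finset.Icc 1 (i - 1), p.2 k) * (p.1 i / p.2 i)) ∧
      IsBresinsky γ r := by
  obtain ⟨γ, hval0, hval, hgcd⟩ := NPmaster r hr p hSCI h1 h2 h3
  obtain ⟨hCan, hInt, hSpec⟩ := hSCI
  have hSpos : ∀ j, j ≤ r → (0:ℚ) < 1 + ∑ k ∈ Finset.Icc 1 j, p.2 k := by
    intro j hj
    have h0 : (0:ℚ) ≤ ∑ k ∈ Finset.Icc 1 j, p.2 k :=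
      Finset.sum_nonneg fun k hk => le_of_lt
        (hCan.1 k (Finset.mem_Icc.mp hk).1 (le_trans (Finset.mem_Icc.mp hk).2 hj)).2
    linarith
  have hX : ∀ k, 1 ≤ k → k ≤ r → (0:ℚ) < p.1 k / p.2 k := fun k h1k h2k =>
    div_pos (hCan.1 k h1k h2k).1 (hCan.1 k h1k h2k).2
  have hSmono : ∀ k, 1 ≤ k → k ≤ r →
      (1 + ∑ j ∈ Finset.Icc 1 (k-1), p.2 j) < 1 + ∑ j ∈ Finset.Icc 1 k, p.2 j := by
    intro k h1k h2k
    have hsp := NP_sum_Icc_split p.2 h1k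
    have hp := (hCan.1 k h1k h2k).2
    rw [hsp]
    linarith
  have h1' : 1 + ∑ k ∈ Finset.Icc 1 r, p.2 k < p.1 1 / p.2 1 := h1
  -- positivity of γ
  have hpos : ∀ k, k ≤ r → 0 < γ k := by
    intro k hk
    rcases Nat.eq_zero_or_pos k with rfl | h1k
    · have h := hSpos r le_rfl
      rw [← hval0] at h
      exact_mod_cast h
    · have hq : (0:ℚ) < (γ k : ℚ) := by
        rw [hval k h1k hk]
        exact mul_pos (hSpos (k-1) (by omega)) (hX k h1k hk)
      exact_mod_cast hq
  -- monotonicity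
  have hmono : ∀ k, k < r → γ k < γ (k + 1) := by
    intro k hk
    have hq : (γ k : ℚ) < (γ (k+1) : ℚ) := by
      rcases Nat.eq_zero_or_pos k with rfl | h1k
      · rw [hval0, hval 1 le_rfl (by omega)]
        rw [show Finset.Icc 1 0 = ∅ from Finset.Icc_eq_empty (by omega)]
        simp only [Finset.sum_empty, add_zero, one_mul]
        exact h1'
      · rw [hval k h1k (by omega), hval (k+1) (by omega) (by omega)]
        simp only [Nat.add_sub_cancel]
        have hm1 : (1 + ∑ j ∈ Finset.Icc 1 (k-1), p.2 j) < 1 + ∑ j ∈ Finset.Icc 1 k, p.2 j :=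
          hSmono k h1k (by omega)
        have hXlt : p.1 k / p.2 k < p.1 (k+1) / p.2 (k+1) := hCan.2 k h1k hk
        calc (1 + ∑ j ∈ Finset.Icc 1 (k-1), p.2 j) * (p.1 k / p.2 k)
            ≤ (1 + ∑ j ∈ Finset.Icc 1 k, p.2 j) * (p.1 k / p.2 k) :=
              mul_le_mul_of_nonneg_right (le_of_lt hm1) (le_of_lt (hX k h1k (by omega)))
          _ < (1 + ∑ j ∈ Finset.Icc 1 k, p.2 j) * (p.1 (k+1) / p.2 (k+1)) :=
              mul_lt_mul_of_pos_left hXlt (hSpos k (by omega))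
    exact_mod_cast hq
  -- gcd = 1
  have hgcd1 : (Finset.range (r+1)).gcd γ = 1 := by
    have h := hgcd r le_rfl
    have hSr := hSpos r le_rfl
    have hq : (((Finset.range (r+1)).gcd γ : ℕ) : ℚ) = 1 := by
      apply mul_right_cancel₀ hSr.ne'
      rw [h, one_mul]
    exact_mod_cast hq
  -- strictly decreasing gcds
  have hdec : ∀ i, 1 ≤ i → i ≤ r →
      (Finset.range (i+1)).gcd γ < (Finset.range i).gcd γ := by
    intro i h1i hir
    obtain ⟨i', rfl⟩ : ∃ i', i = i' + 1 := ⟨i - 1, by omega⟩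
    have ha := hgcd (i'+1) hir
    have hb := hgcd i' (by omega)
    have hS0 := hSpos i' (by omega)
    have hS1 := hSpos (i'+1) hir
    have hSlt : (1 + ∑ k ∈ Finset.Icc 1 i', p.2 k) < 1 + ∑ k ∈ Finset.Icc 1 (i'+1), p.2 k := by
      have := hSmono (i'+1) (by omega) hir
      simpa using this
    have hqb : (0:ℚ) < (((Finset.range (i'+1)).gcd γ : ℕ) : ℚ) := by
      nlinarith [hSpos r le_rfl]
    have hq : (((Finset.range (i'+1+1)).gcd γ : ℕ) : ℚ)
        < (((Finset.range (i'+1)).gcd γ : ℕ) : ℚ) := by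
      have hlt : (((Finset.range (i'+1+1)).gcd γ : ℕ) : ℚ) * (1 + ∑ k ∈ Finset.Icc 1 (i'+1), p.2 k)
          < (((Finset.range (i'+1)).gcd γ : ℕ) : ℚ) * (1 + ∑ k ∈ Finset.Icc 1 (i'+1), p.2 k) := by
        rw [ha, ← hb]
        exact mul_lt_mul_of_pos_left hSlt hqb
      exact lt_of_mul_lt_mul_right hlt (le_of_lt hS1)
    exact_mod_cast hq
  -- condition (3)
  have hcond3 : ∀ i, 1 ≤ i → i + 1 ≤ r →
      ((Finset.range i).gcd γ / (Finset.range (i+1)).gcd γ) * γ i < γ (i+1) := by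
    intro i h1i hi1
    have hdvd : (Finset.range (i+1)).gcd γ ∣ (Finset.range i).gcd γ :=
      Finset.gcd_mono (by intro x hx; simp only [Finset.mem_range] at hx ⊢; omega)
    set w := (Finset.range i).gcd γ / (Finset.range (i+1)).gcd γ with hw
    have hwmul : (Finset.range (i+1)).gcd γ * w = (Finset.range i).gcd γ :=
      Nat.mul_div_cancel' hdvd
    obtain ⟨i', rfl⟩ : ∃ i', i = i' + 1 := ⟨i - 1, by omega⟩
    have ha := hgcd (i'+1) (by omega)
    have hb := hgcd i' (by omega)
    have hS0 := hSpos i' (by omega)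
    have hS1 := hSpos (i'+1) (by omega)
    have hqe2 : (0:ℚ) < (((Finset.range (i'+1+1)).gcd γ : ℕ) : ℚ) := by
      nlinarith [hSpos r le_rfl]
    have hwq : (w:ℚ) * (1 + ∑ k ∈ Finset.Icc 1 i', p.2 k)
        = 1 + ∑ k ∈ Finset.Icc 1 (i'+1), p.2 k := by
      apply mul_left_cancel₀ hqe2.ne'
      have hcast : (((Finset.range (i'+1+1)).gcd γ : ℕ) : ℚ) * (w:ℚ)
          = (((Finset.range (i'+1)).gcd γ : ℕ) : ℚ) := by
        exact_mod_cast congrArg (fun n : ℕ => (n:ℚ)) hwmul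
      calc (((Finset.range (i'+1+1)).gcd γ : ℕ) : ℚ)
            * ((w:ℚ) * (1 + ∑ k ∈ Finset.Icc 1 i', p.2 k))
          = ((((Finset.range (i'+1+1)).gcd γ : ℕ) : ℚ) * (w:ℚ))
            * (1 + ∑ k ∈ Finset.Icc 1 i', p.2 k) := by ring
        _ = (((Finset.range (i'+1)).gcd γ : ℕ) : ℚ) * (1 + ∑ k ∈ Finset.Icc 1 i', p.2 k) := by
            rw [hcast]
        _ = (((Finset.range (i'+1+1)).gcd γ : ℕ) : ℚ)
            * (1 + ∑ k ∈ Finset.Icc 1 (i'+1), p.2 k) := by rw [hb, ← ha]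
    have hq : ((w * γ (i'+1) : ℕ) : ℚ) < (γ (i'+1+1) : ℚ) := by
      push_cast
      rw [hval (i'+1) (by omega) (by omega), hval (i'+1+1) (by omega) (by omega)]
      simp only [Nat.add_sub_cancel]
      have hXlt : p.1 (i'+1) / p.2 (i'+1) < p.1 (i'+1+1) / p.2 (i'+1+1) :=
        hCan.2 (i'+1) (by omega) (by omega)
      calc (w:ℚ) * ((1 + ∑ k ∈ Finset.Icc 1 i', p.2 k) * (p.1 (i'+1) / p.2 (i'+1)))
          = ((w:ℚ) * (1 + ∑ k ∈ Finset.Icc 1 i', p.2 k)) * (p.1 (i'+1) / p.2 (i'+1)) := by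
            ring
        _ = (1 + ∑ k ∈ Finset.Icc 1 (i'+1), p.2 k) * (p.1 (i'+1) / p.2 (i'+1)) := by rw [hwq]
        _ < (1 + ∑ k ∈ Finset.Icc 1 (i'+1), p.2 k) * (p.1 (i'+1+1) / p.2 (i'+1+1)) :=
            mul_lt_mul_of_pos_left hXlt hS1
    exact_mod_cast hq
  exact ⟨γ, hval0, hval, hpos, hmono, hgcd1, hdec, hcond3⟩
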